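/- Let U_1, …, U_k be finite-dimensional F_p-vector spaces, let α : U_1 × ⋯ × U_k → F_p be a multilinear form with bias α ≥ c, let A : U_1 × ⋯ × U_{k−1} → U_k be the multilinear map with α(x_1,…,x_k) = A(x_1,…,x_{k−1})·x_k, and let Z = { z : A(z) = 0 }, so that |Z| ≥ c |U_1 × ⋯ × U_{k−1}|. Let 0 < ε ≤ 1 and set m = ⌈2^7 ε^{−4} c^{−4}⌉. Then there exist t^{(1)}, …, t^{(m)} ∈ U_1 × ⋯ × U_{k−1} such that the function f on U_1 × ⋯ × U_k defined by f(x_1,…,x_k) = (|U_1 × ⋯ × U_{k−1}|/(m |Z|)) · Σ_{i∈[m]} 1[(x_1,…,x_{k−1}) ∈ t^{(i)} + Z] · χ(L_{t^{(i)}}(x_1,…,x_{k−1}) · x_k) satisfies ‖χ ∘ α − f‖_{L²} ≤ ε/2, where L_t(x_1,…,x_{k−1}) = Σ_{I ⊊ [k−1]} (−1)^{k−|I|} A((x_i)_{i∈I}, (t_i)_{i∈[k−1]∖I}). -/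

import Mathlib

/-!
Inclusion–exclusion over the coordinates gives `L_t(x) = A(x) - A(x - t)`, which is `A(x)` for
`x ∈ t + Z`. Hence `f(x, y) = N / (m |Z|) · #{i : x ∈ t⁽ⁱ⁾ + Z} · χ(α(x, y))` and
`|χ(α(x, y)) - f(x, y)|² = (1 - N · #{i : x ∈ t⁽ⁱ⁾ + Z} / (m |Z|))²`, where `N = |U_{[k-1]}|`.
For independent uniform `t⁽ⁱ⁾` the count is binomial with mean `m |Z| / N`, so the average of
this error over all choices of `t` is its normalized variance `(N - |Z|) / (m |Z|) ≤ 1 / (m c)`,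
which the choice of `m` makes at most `ε² / 4`. Some choice of `t` is no worse than the average.
-/

open scoped BigOperators

noncomputable def chi (p : ℕ) (a : ZMod p) : ℂ :=
  Complex.exp (2 * Real.pi * Complex.I * (a.val : ℂ) / (p : ℂ))

noncomputable def expAvg {X : Type*} [Fintype X] (F : X → ℂ) : ℂ :=
  (∑ x : X, F x) / (Fintype.card X : ℂ)

noncomputable def biasF {p : ℕ} {X : Type*} [Fintype X] (α : X → ZMod p) : ℝ :=
  (expAvg fun x => chi p (α x)).re

noncomputable def L2norm {X : Type*} [Fintype X] (F : X → ℂ) : ℝ :=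
  Real.sqrt ((∑ x : X, ‖F x‖ ^ 2) / (Fintype.card X : ℝ))

open Finset

theorem norm_chi (p : ℕ) (a : ZMod p) : ‖chi p a‖ = 1 := by
  rw [chi]
  convert Complex.norm_exp_ofReal_mul_I (2 * Real.pi * a.val / p) using 3
  push_cast
  ring

theorem L2norm_le_of_sum_sq_le {X : Type*} [Fintype X] {F : X → ℂ} {δ : ℝ} (hδ : 0 ≤ δ)
    (h : ∑ x, ‖F x‖ ^ 2 ≤ Fintype.card X * δ ^ 2) : L2norm F ≤ δ :=
  (Real.sqrt_le_left hδ).mpr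
    (div_le_of_le_mul₀ (Nat.cast_nonneg _) (sq_nonneg δ) (h.trans_eq (mul_comm _ _)))

theorem norm_sub_ofReal_mul_sq {w : ℂ} (hw : ‖w‖ = 1) (a : ℝ) :
    ‖w - a * w‖ ^ 2 = (1 - a) ^ 2 := by
  rw [← one_sub_mul, norm_mul, hw, mul_one, ← Complex.ofReal_one, ← Complex.ofReal_sub,
    Complex.norm_real, Real.norm_eq_abs, sq_abs]

namespace MultilinearMap

variable {R ι : Type*} [CommRing R] [Fintype ι] [DecidableEq ι] {M : ι → Type*}
  [∀ i, AddCommGroup (M i)] [∀ i, Module R (M i)] {N : Type*} [AddCommGroup N] [Module R N]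

theorem map_sub_eq_sum_piecewise (f : MultilinearMap R M N) (x t : ∀ i, M i) :
    f (x - t) = ∑ S : Finset ι, (-1 : R) ^ (Fintype.card ι - #S) • f (S.piecewise x t) := by
  rw [sub_eq_add_neg, f.map_add_univ]
  refine sum_congr rfl fun S _ => ?_
  have h : S.piecewise x (-t) =
      Sᶜ.piecewise (fun i => (-1 : R) • S.piecewise x t i) (S.piecewise x t) := by
    ext i
    by_cases hi : i ∈ S <;> simp [hi]
  rw [h, f.map_piecewise_smul, prod_const, card_compl]

theorem sum_ne_univ_piecewise_eq_neg_of_map_sub_eq_zero (f : MultilinearMap R M N)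
    {x t : ∀ i, M i} (h : f (x - t) = 0) :
    ∑ S ∈ univ.filter (· ≠ univ), (-1 : R) ^ (Fintype.card ι - #S) • f (S.piecewise x t) =
      -f x := by
  rw [filter_ne', eq_neg_iff_add_eq_zero, ← h, f.map_sub_eq_sum_piecewise,
    ← add_sum_erase _ _ (mem_univ univ), add_comm]
  simp

end MultilinearMap

theorem MultilinearMap.sum_ne_univ_neg_one_pow_smul_ite_eq_of_map_sub_eq_zero {R : Type*}
    [CommRing R] {k : ℕ} {M : Fin (k - 1) → Type*} [∀ i, AddCommGroup (M i)]
    [∀ i, Module R (M i)] {N : Type*} [AddCommGroup N] [Module R N] (f : MultilinearMap R M N)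
    {x t : ∀ i, M i} (h : f (x - t) = 0) :
    ∑ S ∈ univ.filter (fun S : Finset (Fin (k - 1)) => S ≠ univ),
      (-1 : R) ^ (k - #S) • f (fun j => if j ∈ S then x j else t j) = f x := by
  have hsign : ∀ S ∈ univ.filter (fun S : Finset (Fin (k - 1)) => S ≠ univ),
      (-1 : R) ^ (k - #S) • f (fun j => if j ∈ S then x j else t j) =
        -((-1 : R) ^ (Fintype.card (Fin (k - 1)) - #S) • f (S.piecewise x t)) := by
    intro S hS
    have hlt : #S < k - 1 := by
      simpa using card_lt_card (ssubset_univ_iff.mpr (mem_filter.mp hS).2)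
    rw [Fintype.card_fin, ← neg_smul, show k - #S = k - 1 - #S + 1 by omega, pow_succ,
      mul_neg_one]
    rfl
  rw [sum_congr rfl hsign, sum_neg_distrib,
    f.sum_ne_univ_piecewise_eq_neg_of_map_sub_eq_zero h, neg_neg]

theorem indicator_translate_mul_chi_eq {p k : ℕ} {U : Fin (k - 1) → Type*}
    [∀ i, AddCommGroup (U i)] [∀ i, Module (ZMod p) (U i)] {V : Type*} [AddCommGroup V]
    [Module (ZMod p) V] [DecidableEq V] (B : V →ₗ[ZMod p] V →ₗ[ZMod p] ZMod p)
    (A : MultilinearMap (ZMod p) U V) (u x : ∀ i, U i) (y : V) :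
    Set.indicator ((fun z : ∀ i, U i => u + z) '' {z | A z = 0}) (fun _ => (1 : ℂ)) x *
        chi p (B (∑ S ∈ univ.filter (fun S : Finset (Fin (k - 1)) => S ≠ univ),
          (-1 : ZMod p) ^ (k - #S) • A (fun j => if j ∈ S then x j else u j)) y) =
      if A (x - u) = 0 then chi p (B (A x) y) else 0 := by
  have hmem : x ∈ (fun z : ∀ i, U i => u + z) '' {z | A z = 0} ↔ A (x - u) = 0 := by
    rw [Set.image_add_left, Set.mem_preimage, neg_add_eq_sub]
    rfl
  split_ifs with h
  · rw [Set.indicator_of_mem (hmem.mpr h), one_mul,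
      A.sum_ne_univ_neg_one_pow_smul_ite_eq_of_map_sub_eq_zero h]
  · rw [Set.indicator_of_notMem (mt hmem.mp h), zero_mul]

section Sampling

variable {P : Type*} [Fintype P]

theorem sum_pi_sum_comp_eq_zero {G : Type*} [AddCommMonoid G] (Y : P → G)
    (hY : ∑ u, Y u = 0) (m : ℕ) : ∑ t : Fin m → P, ∑ i, Y (t i) = 0 := by
  classical
  rw [sum_comm]
  refine sum_eq_zero fun i _ => ?_
  rw [← (Equiv.funSplitAt i P).symm.sum_comp, Fintype.sum_prod_type]
  simp [Equiv.funSplitAt, Equiv.piSplitAt, ← smul_sum, hY]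

theorem card_mul_sum_pi_sq_sum_comp {R : Type*} [CommRing R] (Y : P → R)
    (hY : ∑ u, Y u = 0) (m : ℕ) :
    Fintype.card P * ∑ t : Fin m → P, (∑ i, Y (t i)) ^ 2 =
      Fintype.card P ^ m * m * ∑ u, Y u ^ 2 := by
  induction m with
  | zero => simp
  | succ m ih =>
    rw [← (Fin.consEquiv fun _ => P).sum_comp, Fintype.sum_prod_type]
    simp only [Fin.consEquiv_apply, Fin.sum_univ_succ, Fin.cons_zero, Fin.cons_succ, add_sq,
      sum_add_distrib, ← sum_mul, ← mul_sum, sum_pi_sum_comp_eq_zero Y hY, sum_const,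
      card_univ, Fintype.card_pi, prod_const, Fintype.card_fin, nsmul_eq_mul]
    push_cast
    linear_combination (Fintype.card P : R) * ih

variable [DecidableEq P]

theorem sum_pi_sq_one_sub_card_filter_mem (T : Finset P) (hT : T.Nonempty) {m : ℕ}
    (hm : 0 < m) :
    ∑ t : Fin m → P, (1 - Fintype.card P / (m * #T) * #{i | t i ∈ T} : ℝ) ^ 2 =
      Fintype.card P ^ m * (Fintype.card P - #T) / (m * #T) := by
  set N : ℝ := (Fintype.card P : ℝ)
  have hN : 0 < N := by
    obtain ⟨u, -⟩ := hT
    exact Nat.cast_pos.mpr (Fintype.card_pos_iff.mpr ⟨u⟩)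
  have hTpos : (0 : ℝ) < #T := by exact_mod_cast hT.card_pos
  have hmpos : (0 : ℝ) < m := by exact_mod_cast hm
  set Y : P → ℝ := fun u => #T / N - if u ∈ T then 1 else 0
  have hY : ∑ u, Y u = 0 := by
    simp only [Y, sum_sub_distrib, sum_const, card_univ, nsmul_eq_mul, sum_boole,
      filter_mem_eq_inter, univ_inter]
    field_simp
    ring
  have hY2 : ∑ u, Y u ^ 2 = #T * (N - #T) / N := by
    have (u : P) : Y u ^ 2 =
        (#T / N) ^ 2 - 2 * (#T / N) * (if u ∈ T then 1 else 0) + (if u ∈ T then 1 else 0) := by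
      simp only [Y]
      split_ifs <;> ring
    simp only [this, sum_add_distrib, sum_sub_distrib, ← mul_sum, sum_const, card_univ,
      nsmul_eq_mul, sum_boole, filter_mem_eq_inter, univ_inter]
    field_simp
    ring
  have hcount (t : Fin m → P) :
      1 - N / (m * #T) * #{i | t i ∈ T} = N / (m * #T) * ∑ i, Y (t i) := by
    simp only [Y, sum_sub_distrib, sum_const, card_univ, Fintype.card_fin, nsmul_eq_mul,
      sum_boole]
    field_simp
  have key : N * ∑ t : Fin m → P, (∑ i, Y (t i)) ^ 2 = N ^ m * m * (#T * (N - #T) / N) := by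
    rw [← hY2]
    exact card_mul_sum_pi_sq_sum_comp Y hY m
  simp only [hcount, mul_pow, ← mul_sum]
  field_simp
  field_simp at key
  linear_combination key

theorem exists_sum_sq_one_sub_card_filter_sub_mem_le [AddCommGroup P] (Z : Finset P)
    (hZ : Z.Nonempty) {m : ℕ} (hm : 0 < m) :
    ∃ t : Fin m → P, ∑ x, (1 - Fintype.card P / (m * #Z) * #{i | x - t i ∈ Z} : ℝ) ^ 2 ≤
      Fintype.card P * (Fintype.card P - #Z) / (m * #Z) := by
  have htranslate (x : P) : #{u | x - u ∈ Z} = #Z :=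
    card_nbij' (x - ·) (x - ·) (fun u hu => by simpa using hu) (fun z hz => by simpa using hz)
      (fun u _ => sub_sub_cancel x u) (fun z _ => sub_sub_cancel x z)
  have htotal :
      ∑ t : Fin m → P, ∑ x, (1 - Fintype.card P / (m * #Z) * #{i | x - t i ∈ Z} : ℝ) ^ 2 =
        ∑ _t : Fin m → P, (Fintype.card P * (Fintype.card P - #Z) / (m * #Z) : ℝ) := by
    rw [sum_comm]
    have hx (x : P) := sum_pi_sq_one_sub_card_filter_mem {u | x - u ∈ Z}
      (card_pos.mp ((htranslate x).symm ▸ hZ.card_pos)) hm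
    simp only [mem_filter, mem_univ, true_and, htranslate] at hx
    simp only [hx, sum_const, card_univ, Fintype.card_fun, Fintype.card_fin, nsmul_eq_mul]
    push_cast
    ring
  obtain ⟨t, -, ht⟩ := exists_le_of_sum_le univ_nonempty htotal.le
  exact ⟨t, ht⟩

end Sampling

/- With `a = 4 / (c ε²)` the ceiling is at least `1` and at least `a²`, and `a ≤ max 1 a²`. -/
theorem four_le_ceil_mul_mul_sq {c ε : ℝ} (hc : 0 < c) (hc1 : c ≤ 1) (hε : 0 < ε) :
    4 ≤ (⌈(2 : ℝ) ^ 7 * ε⁻¹ ^ 4 * c⁻¹ ^ 4⌉₊ : ℝ) * c * ε ^ 2 := by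
  set M : ℝ := ((⌈(2 : ℝ) ^ 7 * ε⁻¹ ^ 4 * c⁻¹ ^ 4⌉₊ : ℕ) : ℝ)
  set a := 4 / (c * ε ^ 2)
  have hM1 : 1 ≤ M := Nat.one_le_cast.mpr (Nat.ceil_pos.mpr (by positivity))
  have hMa : a ^ 2 ≤ M := by
    refine le_trans ?_ (Nat.le_ceil _)
    simp only [a, div_pow, inv_pow]
    rw [div_le_iff₀ (by positivity)]
    field_simp
    nlinarith [pow_le_one₀ hc.le hc1 (n := 2), pow_pos hε 4, pow_pos hc 2]
  have ha : a ≤ M := by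
    rcases le_total a 1 with h | h
    · linarith
    · nlinarith
  calc (4 : ℝ) = a * c * ε ^ 2 := by simp only [a]; field_simp
    _ ≤ M * c * ε ^ 2 := by gcongr

theorem sub_div_ceil_mul_le_sq_half {N z c ε : ℝ} (hc : 0 < c) (hε : 0 < ε) (hN : 0 < N)
    (hcz : c * N ≤ z) (hzN : z ≤ N) :
    (N - z) / (⌈(2 : ℝ) ^ 7 * ε⁻¹ ^ 4 * c⁻¹ ^ 4⌉₊ * z) ≤ (ε / 2) ^ 2 := by
  have hc1 : c ≤ 1 := by nlinarith
  have hM := four_le_ceil_mul_mul_sq hc hc1 hε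
  set M : ℝ := ((⌈(2 : ℝ) ^ 7 * ε⁻¹ ^ 4 * c⁻¹ ^ 4⌉₊ : ℕ) : ℝ)
  have hz : 0 < z := (mul_pos hc hN).trans_le hcz
  have hMz : c * (4 * N) ≤ c * (M * ε ^ 2 * z) := by nlinarith
  rw [div_le_iff₀ (by positivity)]
  nlinarith [le_of_mul_le_mul_left hMz hc]

theorem first_approximation_general (p k : ℕ)
    (U : Fin (k - 1) → Type) [∀ i, AddCommGroup (U i)] [∀ i, Module (ZMod p) (U i)]
    [∀ i, Fintype (U i)]
    (V : Type) [AddCommGroup V] [Module (ZMod p) V] [Fintype V]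
    (B : V →ₗ[ZMod p] V →ₗ[ZMod p] ZMod p)
    (A : MultilinearMap (ZMod p) U V)
    (c ε : ℝ) (hc : 0 < c) (hε0 : 0 < ε)
    (hZ : c * (Fintype.card (∀ i, U i) : ℝ) ≤ (({z : ∀ i, U i | A z = 0}).ncard : ℝ)) :
    ∃ t : Fin ⌈(2 : ℝ) ^ 7 * ε⁻¹ ^ 4 * c⁻¹ ^ 4⌉₊ → (∀ i, U i),
      L2norm (fun xy : (∀ i, U i) × V =>
        chi p (B (A xy.1) xy.2) -
          ((Fintype.card (∀ i, U i) : ℂ) /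
              ((⌈(2 : ℝ) ^ 7 * ε⁻¹ ^ 4 * c⁻¹ ^ 4⌉₊ : ℂ) *
                (({z : ∀ i, U i | A z = 0}).ncard : ℂ))) *
            ∑ i : Fin ⌈(2 : ℝ) ^ 7 * ε⁻¹ ^ 4 * c⁻¹ ^ 4⌉₊,
              Set.indicator ((fun z : ∀ i, U i => t i + z) '' {z : ∀ i, U i | A z = 0})
                  (fun _ => (1 : ℂ)) xy.1 *
                chi p (B
                  (∑ S ∈ Finset.univ.filter
                      (fun S : Finset (Fin (k - 1)) => S ≠ Finset.univ),
                    ((-1 : ZMod p) ^ (k - S.card)) •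
                      A (fun j => if j ∈ S then xy.1 j else t i j))
                  xy.2)) ≤ ε / 2 := by
  classical
  set M := ⌈(2 : ℝ) ^ 7 * ε⁻¹ ^ 4 * c⁻¹ ^ 4⌉₊
  set Z : Finset (∀ i, U i) := {z | A z = 0}
  have hmem (z : ∀ i, U i) : z ∈ Z ↔ A z = 0 := by simp [Z]
  have hZ_ncard : ({z : ∀ i, U i | A z = 0}).ncard = #Z := by
    rw [← Set.ncard_coe_finset]
    simp [Z]
  rw [hZ_ncard] at hZ ⊢
  have hN : (0 : ℝ) < Fintype.card (∀ i, U i) := Nat.cast_pos.mpr Fintype.card_pos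
  have hZpos : 0 < #Z := Nat.cast_pos.mp ((mul_pos hc hN).trans_le hZ)
  obtain ⟨t, ht⟩ := exists_sum_sq_one_sub_card_filter_sub_mem_le Z (card_pos.mp hZpos)
    (Nat.ceil_pos.mpr (by positivity) : 0 < M)
  simp only [hmem] at ht
  refine ⟨t, L2norm_le_of_sum_sq_le (by positivity) ?_⟩
  simp only [indicator_translate_mul_chi_eq, sum_ite, sum_const_zero, add_zero, sum_const,
    nsmul_eq_mul, ← mul_assoc, ← Complex.ofReal_natCast, ← Complex.ofReal_mul,
    ← Complex.ofReal_div, norm_sub_ofReal_mul_sq (norm_chi _ _), Fintype.sum_prod_type,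
    card_univ, Fintype.card_prod]
  rw [← mul_sum, Nat.cast_mul, mul_comm (Fintype.card (∀ i, U i) : ℝ), mul_assoc]
  gcongr
  calc _ ≤ _ := ht
    _ ≤ Fintype.card (∀ i, U i) * (ε / 2) ^ 2 := by
      rw [mul_div_assoc]
      gcongr
      exact sub_div_ceil_mul_le_sq_half hc hε0 hN hZ (Nat.cast_le.mpr (card_le_univ Z))

/-- First approximation step in the proof of the approximation theorem:
with `α(x, y) = B (A x) y` of bias at least `c` (where `B` is a nondegenerate symmetric
dot product on the last space), `Z = {z : A z = 0}` of density at least `c`, and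
`m = ⌈2⁷ ε⁻⁴ c⁻⁴⌉`, there are translates `t⁽¹⁾, …, t⁽ᵐ⁾` such that the function
`f(x, y) = |U_{[k-1]}|/(m |Z|) ∑_i 1[x ∈ t⁽ⁱ⁾ + Z] χ(B (L_{t⁽ⁱ⁾} x) y)` satisfies
`‖χ ∘ α − f‖_{L²} ≤ ε/2`, where
`L_t (x) = ∑_{I ⊊ [k-1]} (-1)^{k-|I|} A(x_I, t_{[k-1] ∖ I})`. -/
theorem first_approximation (p k : ℕ) [Fact p.Prime] (hk : 1 ≤ k)
    (U : Fin (k - 1) → Type) [∀ i, AddCommGroup (U i)] [∀ i, Module (ZMod p) (U i)]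
    [∀ i, Fintype (U i)]
    (V : Type) [AddCommGroup V] [Module (ZMod p) V] [Fintype V]
    (B : V →ₗ[ZMod p] V →ₗ[ZMod p] ZMod p)
    (hBsymm : ∀ v w, B v w = B w v)
    (hBnondeg : ∀ v, (∀ w, B v w = 0) → v = 0)
    (A : MultilinearMap (ZMod p) U V)
    (c ε : ℝ) (hc : 0 < c) (hε0 : 0 < ε) (hε1 : ε ≤ 1)
    (hbias : c ≤ biasF fun xy : (∀ i, U i) × V => B (A xy.1) xy.2)
    (hZ : c * (Fintype.card (∀ i, U i) : ℝ) ≤ (({z : ∀ i, U i | A z = 0}).ncard : ℝ)) :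
    ∃ t : Fin ⌈(2 : ℝ) ^ 7 * ε⁻¹ ^ 4 * c⁻¹ ^ 4⌉₊ → (∀ i, U i),
      L2norm (fun xy : (∀ i, U i) × V =>
        chi p (B (A xy.1) xy.2) -
          ((Fintype.card (∀ i, U i) : ℂ) /
              ((⌈(2 : ℝ) ^ 7 * ε⁻¹ ^ 4 * c⁻¹ ^ 4⌉₊ : ℂ) *
                (({z : ∀ i, U i | A z = 0}).ncard : ℂ))) *
            ∑ i : Fin ⌈(2 : ℝ) ^ 7 * ε⁻¹ ^ 4 * c⁻¹ ^ 4⌉₊,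
              Set.indicator ((fun z : ∀ i, U i => t i + z) '' {z : ∀ i, U i | A z = 0})
                  (fun _ => (1 : ℂ)) xy.1 *
                chi p (B
                  (∑ S ∈ Finset.univ.filter
                      (fun S : Finset (Fin (k - 1)) => S ≠ Finset.univ),
                    ((-1 : ZMod p) ^ (k - S.card)) •
                      A (fun j => if j ∈ S then xy.1 j else t i j))
                  xy.2)) ≤ ε / 2 :=
  first_approximation_general p k U V B A c ε hc hε0 hZ
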